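/- Let $M$ be a smooth manifold, $\omega$ an $\mathbb{R}^n$-valued 1-form, $H^1 = \ker(\omega)$, and $H^0 = \ker(d\omega|_{H^1})$ as above. If $X, Y$ are vector fields valued in $H^0$ and $Z$ is a vector field valued in $H^1$, then $d\omega([X,Y], Z) = 0$; consequently $[X,Y]$ takes values in $H^0$, so $H^0$ is an involutive distribution. -/
import Mathlib

/-- Same setting as Statement 1: `H¹ = ker ω`,
`H⁰ = ker (dω|_{H¹})`, Cartan's formula is assumed, and (as previously established) the
bracket of an `H⁰`-field with an `H¹`-field is an `H¹`-field.  If `X, Y` are vector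
fields valued in `H⁰` and `Z` is valued in `H¹`, then `dω([X,Y], Z) = 0`; consequently
`[X,Y]` is valued in `H⁰`, so `H⁰` is an involutive distribution. -/
theorem bracket_of_H0_fields_in_H0
    {L F : Type*} [LieRing L] [LieAlgebra ℝ L] [AddCommGroup F] [Module ℝ F]
    (ω : L →ₗ[ℝ] F) (dω : L →ₗ[ℝ] L →ₗ[ℝ] F) (act : L → F →ₗ[ℝ] F)
    (hCartan : ∀ X Y : L, dω X Y = act X (ω Y) - act Y (ω X) - ω ⁅X, Y⁆)
    (hH0H1 : ∀ X Z : L, (ω X = 0 ∧ ∀ W : L, ω W = 0 → dω X W = 0) → ω Z = 0 →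
      ω ⁅X, Z⁆ = 0)
    (X Y : L)
    (hX : ω X = 0 ∧ ∀ Z : L, ω Z = 0 → dω X Z = 0)
    (hY : ω Y = 0 ∧ ∀ Z : L, ω Z = 0 → dω Y Z = 0) :
    (∀ Z : L, ω Z = 0 → dω ⁅X, Y⁆ Z = 0) ∧
      (ω ⁅X, Y⁆ = 0 ∧ ∀ Z : L, ω Z = 0 → dω ⁅X, Y⁆ Z = 0) := by
  have hωXY : ω ⁅X, Y⁆ = 0 := by
    have h := hCartan X Y
    rw [hX.1, hY.1, hX.2 Y hY.1] at h
    simpa using h.symm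
  have key : ∀ Z : L, ω Z = 0 → dω ⁅X, Y⁆ Z = 0 := by
    intro Z hZ
    have h := hCartan ⁅X, Y⁆ Z
    rw [hZ, hωXY] at h
    have hYZ : ω ⁅Y, Z⁆ = 0 := hH0H1 Y Z hY hZ
    have hXZ : ω ⁅X, Z⁆ = 0 := hH0H1 X Z hX hZ
    have h1 : ω ⁅X, ⁅Y, Z⁆⁆ = 0 := hH0H1 X _ hX hYZ
    have h2 : ω ⁅Y, ⁅X, Z⁆⁆ = 0 := hH0H1 Y _ hY hXZ
    have hJ : ⁅⁅X, Y⁆, Z⁆ = ⁅X, ⁅Y, Z⁆⁆ - ⁅Y, ⁅X, Z⁆⁆ := by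
      exact lie_lie X Y Z
    rw [hJ] at h
    simp only [map_zero, map_sub, h1, h2, sub_zero, zero_sub, neg_zero] at h
    exact h
  exact ⟨key, hωXY, key⟩
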